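/- arXiv:1508.02101 — 4 statements merged into one kernel-verified Lean document; each statement's English description precedes it below -/
import Mathlib

section
/- The infinite word (01)^ω contains no factor of the form X·Y·X^R·X^R·Y with X and Y nonempty binary words; that is, (01)^ω avoids the pattern xyx^Rx^Ry. -/
def IsFactor {α : Type*} (u : List α) (w : ℕ → α) : Prop :=
  ∃ i, u = (List.range u.length).map fun j => w (i + j)

def alt : ℕ → Fin 2 := fun n => if n % 2 = 0 then 0 else 1

lemma alt_parity {m n : ℕ} (h : alt m = alt n) : m % 2 = n % 2 := by
  unfold alt at h
  rcases Nat.mod_two_eq_zero_or_one m with hm | hm <;>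
    rcases Nat.mod_two_eq_zero_or_one n with hn | hn <;>
      simp [hm, hn] at h ⊢

/-- `(01)^ω` avoids the pattern `x y x^R x^R y`. -/
theorem stmt4 (X Y : List (Fin 2)) (hX : X ≠ []) (hY : Y ≠ []) :
    ¬ IsFactor (X ++ Y ++ X.reverse ++ X.reverse ++ Y) alt := by
  rintro ⟨i, h⟩
  set L := X ++ Y ++ X.reverse ++ X.reverse ++ Y with hL
  set a := X.length with ha
  set b := Y.length with hb
  have ha1 : 1 ≤ a := List.length_pos_iff.mpr hX
  have hb1 : 1 ≤ b := List.length_pos_iff.mpr hY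
  have hlen : L.length = 3*a + 2*b := by simp [hL, ← ha, ← hb]; omega
  have key : ∀ p : ℕ, p < 3*a + 2*b → L[p]? = some (alt (i + p)) := by
    intro p hp
    rw [h, List.getElem?_map, List.getElem?_range (by rw [hlen]; exact hp)]
    rfl
  have e1 : L[a-1]? = X[a-1]? := by
    simp only [hL, List.getElem?_append, List.length_append, List.length_reverse, ← ha, ← hb]
    rw [if_pos (by omega), if_pos (by omega), if_pos (by omega), if_pos (by omega)]
  have e2 : L[a+b]? = X[a-1]? := by
    simp only [hL, List.getElem?_append, List.length_append, List.length_reverse, ← ha, ← hb]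
    rw [if_pos (by omega), if_pos (by omega), if_neg (by omega),
      show a + b - (a + b) = 0 from by omega, List.getElem?_reverse (by omega)]
    congr 1
  have e3 : L[a]? = Y[0]? := by
    simp only [hL, List.getElem?_append, List.length_append, List.length_reverse, ← ha, ← hb]
    rw [if_pos (by omega), if_pos (by omega), if_pos (by omega), if_neg (by omega)]
    congr 1
    omega
  have e4 : L[3*a+b]? = Y[0]? := by
    simp only [hL, List.getElem?_append, List.length_append, List.length_reverse, ← ha, ← hb]
    rw [if_neg (by omega)]
    congr 1
    omega
  have k1 := key (a-1) (by omega)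
  have k2 := key (a+b) (by omega)
  have k3 := key a (by omega)
  have k4 := key (3*a+b) (by omega)
  rw [e1] at k1; rw [e2] at k2; rw [e3] at k3; rw [e4] at k4
  have p1 : alt (i + (a-1)) = alt (i + (a+b)) := by
    have := k1.symm.trans k2
    exact Option.some.inj this
  have p2 : alt (i + a) = alt (i + (3*a+b)) := by
    exact Option.some.inj (k3.symm.trans k4)
  have q1 := alt_parity p1
  have q2 := alt_parity p2
  omega
end

section
/- Let g be a word over {0,1,2} that contains no length-2 factor cd with c ≡ d+1 (mod 3). Then for any factor z of g containing at least two distinct letters, the reversal z^R is not a factor of g. -/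
/-! A word with two distinct letters has two distinct adjacent letters `c d`. In `g` these satisfy
`c ≠ d + 1`, so over `ℤ/3` they must satisfy `d = c + 1`. The reversal of `z` contains the pair
`d c`, which is forbidden in `g`. -/

theorem List.exists_infix_pair_ne {α : Type*} {z : List α} {a b : α} (ha : a ∈ z) (hb : b ∈ z)
    (hab : a ≠ b) : ∃ c d, [c, d] <:+: z ∧ c ≠ d := by
  by_contra! hconst
  have hchain : z.IsChain (· = ·) :=
    List.isChain_iff_forall_rel_of_append_cons_cons.2 fun c d l₁ l₂ hz =>
      hconst c d ⟨l₁, l₂, by simp [hz]⟩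
  obtain ⟨x, t, rfl⟩ := List.exists_cons_of_ne_nil (List.ne_nil_of_mem ha)
  have hrep := List.isChain_eq_iff_eq_replicate.1 hchain x rfl
  rw [hrep] at ha hb
  exact hab ((List.eq_of_mem_replicate ha).trans (List.eq_of_mem_replicate hb).symm)

/-- If a word `g` over `{0,1,2}` has no length-2 factor `cd` with `c ≡ d+1 (mod 3)`,
then no factor of `g` containing two distinct letters has its reversal a factor of `g`. -/
theorem stmt8 (g : List (Fin 3))
    (h : ∀ c d : Fin 3, [c, d] <:+: g → c ≠ d + 1)
    (z : List (Fin 3)) (hz : z <:+: g)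
    (htwo : ∃ a ∈ z, ∃ b ∈ z, a ≠ b) :
    ¬ z.reverse <:+: g := by
  intro hrev
  obtain ⟨a, ha, b, hb, hab⟩ := htwo
  obtain ⟨c, d, hcd, hne⟩ := List.exists_infix_pair_ne ha hb hab
  have hsucc : d = c + 1 := by
    have key : ∀ c d : Fin 3, c ≠ d → c ≠ d + 1 → d = c + 1 := by decide
    exact key c d hne (h c d (hcd.trans hz))
  have hdc : [d, c] <:+: z.reverse := List.reverse_infix.2 hcd
  exact h d c (hdc.trans hrev) hsucc
end

section
/- Let g be an infinite word over {0,1,2} such that: (i) g contains no length-2 factor cd with c ≡ d+1 (mod 3); (ii) g contains no square XX with |X| ≥ 2; (iii) no letter is repeated 4 or more times consecutively in g. Then g avoids the patterns xyxy^R and xyx^Ry^R, i.e., g has no factor XYXY^R and no factor XYX^RY^R with X, Y nonempty. -/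
lemma factor_split {α : Type*} {g : ℕ → α} {u v : List α}
    (h : IsFactor (u ++ v) g) : IsFactor u g ∧ IsFactor v g := by
  obtain ⟨i, hi⟩ := h
  rw [List.length_append, List.range_add, List.map_append, List.map_map] at hi
  have hlen : u.length = ((List.range u.length).map fun j => g (i + j)).length := by simp
  obtain ⟨e1, e2⟩ := List.append_inj hi hlen
  refine ⟨⟨i, e1⟩, ⟨i + u.length, ?_⟩⟩
  conv_lhs => rw [e2]
  simp only [List.length_map, List.length_range] at *
  apply List.map_congr_left
  intro j hj
  simp [Nat.add_assoc]

lemma step_lemma {g : ℕ → Fin 3}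
    (h1 : ∀ c d : Fin 3, IsFactor [c, d] g → c ≠ d + 1) (k : ℕ) :
    g k ≠ g (k + 1) + 1 := by
  apply h1
  exact ⟨k, by simp [List.range_succ]⟩

lemma entry_eq {α : Type*} {g : ℕ → α} {v : List α} {i : ℕ}
    (hv : v = (List.range v.length).map fun j => g (i + j))
    (j : ℕ) (hj : j < v.length) : v[j] = g (i + j) := by
  have h := congrArg (fun l => l[j]?) hv
  simp only [List.getElem?_eq_getElem, hj, List.getElem?_map, List.getElem?_range,
    Option.map_some] at h
  exact Option.some.inj h

lemma rev_eq_self {g : ℕ → Fin 3}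
    (h1 : ∀ c d : Fin 3, IsFactor [c, d] g → c ≠ d + 1)
    {v : List (Fin 3)} (hv : IsFactor v g) (hvr : IsFactor v.reverse g) :
    v.reverse = v := by
  obtain ⟨i, hi⟩ := hv
  obtain ⟨i', hi'⟩ := hvr
  -- adjacent letters of v are equal
  have adj : ∀ j, ∀ (hj : j + 1 < v.length), v[j]'(Nat.lt_of_succ_lt hj) = v[j+1] := by
    intro j hj
    have hj0 : j < v.length := by omega
    have e1 : v[j] = g (i + j) := entry_eq hi j hj0
    have e2 : v[j+1] = g (i + j + 1) := by
      rw [entry_eq hi (j+1) hj]; ring_nf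
    have s1 : v[j] ≠ v[j+1] + 1 := by
      rw [e1, e2]; exact step_lemma h1 (i + j)
    -- reverse positions
    have hlr : v.reverse.length = v.length := by simp
    set p := v.length - 2 - j with hp
    have hp1 : p + 1 < v.reverse.length := by simp; omega
    have hp0 : p < v.reverse.length := by omega
    have r1 : v.reverse[p] = v[j+1] := by
      rw [List.getElem_reverse]
      simp only [show v.length - 1 - p = j + 1 from by omega]
    have r2 : v.reverse[p+1] = v[j] := by
      rw [List.getElem_reverse]
      simp only [show v.length - 1 - (p+1) = j from by omega]
    have e3 : v.reverse[p] = g (i' + p) := entry_eq hi' p hp0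
    have e4 : v.reverse[p+1] = g (i' + p + 1) := by
      rw [entry_eq hi' (p+1) hp1]; ring_nf
    have s2 : v[j+1] ≠ v[j] + 1 := by
      rw [← r1, ← r2, e3, e4]; exact step_lemma h1 (i' + p)
    revert s1 s2
    generalize v[j] = a; generalize v[j+1] = b
    revert a b; decide
  have const : ∀ j, ∀ (hj : j < v.length), v[j] = v[0]'(by omega) := by
    intro j
    induction j with
    | zero => intro _; rfl
    | succ n ih =>
      intro hj
      rw [← adj n hj]
      exact ih (by omega)
  apply List.ext_getElem (by simp)
  intro j hj hj'
  rw [List.getElem_reverse]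
  rw [const (v.length - 1 - j) (by omega), const j hj']

/-- An infinite ternary word with no length-2 factor `cd` where `c ≡ d+1 (mod 3)`,
no square `XX` with `|X| ≥ 2`, and no letter repeated 4 times consecutively,
avoids the patterns `x y x y^R` and `x y x^R y^R`. -/
theorem stmt9 (g : ℕ → Fin 3)
    (h1 : ∀ c d : Fin 3, IsFactor [c, d] g → c ≠ d + 1)
    (h2 : ∀ X : List (Fin 3), 2 ≤ X.length → ¬ IsFactor (X ++ X) g)
    (h3 : ∀ a : Fin 3, ¬ IsFactor [a, a, a, a] g)
    (X Y : List (Fin 3)) (hX : X ≠ []) (hY : Y ≠ []) :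
    ¬ IsFactor (X ++ Y ++ X ++ Y.reverse) g ∧
      ¬ IsFactor (X ++ Y ++ X.reverse ++ Y.reverse) g := by
  have hXl : 0 < X.length := List.length_pos_iff.mpr hX
  have hYl : 0 < Y.length := List.length_pos_iff.mpr hY
  constructor
  · intro h
    have e : X ++ Y ++ X ++ Y.reverse = X ++ (Y ++ (X ++ Y.reverse)) := by
      simp [List.append_assoc]
    have h' := h
    rw [e] at h'
    have hrest := (factor_split h').2
    have hYf := (factor_split hrest).1
    have hYr := (factor_split (factor_split hrest).2).2
    have hpal := rev_eq_self h1 hYf hYr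
    apply h2 (X ++ Y) (by simp; omega)
    have e2 : (X ++ Y) ++ (X ++ Y) = X ++ Y ++ X ++ Y.reverse := by
      rw [hpal]; simp [List.append_assoc]
    rw [e2]; exact h
  · intro h
    have e : X ++ Y ++ X.reverse ++ Y.reverse = X ++ (Y ++ (X.reverse ++ Y.reverse)) := by
      simp [List.append_assoc]
    have h' := h
    rw [e] at h'
    have hXf := (factor_split h').1
    have hrest := (factor_split h').2
    have hYf := (factor_split hrest).1
    have htail := (factor_split hrest).2
    have hXr := (factor_split htail).1
    have hYr := (factor_split htail).2
    have hpalX := rev_eq_self h1 hXf hXr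
    have hpalY := rev_eq_self h1 hYf hYr
    apply h2 (X ++ Y) (by simp; omega)
    have e2 : (X ++ Y) ++ (X ++ Y) = X ++ Y ++ X.reverse ++ Y.reverse := by
      rw [hpalX, hpalY]; simp [List.append_assoc]
    rw [e2]; exact h
end

section
/- The patterns xyxy^R and xyx^Ry^R are 3-avoidable: there exists an infinite word over a 3-letter alphabet none of whose factors is of the form XYXY^R or XYX^RY^R with X, Y nonempty. -/
/-- step sequence: fixed point structure of 0→0011, 1→0101 -/
def s : ℕ → Bool
  | n =>
    if h0 : n % 4 = 0 then false
    else if n % 4 = 3 then true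
    else if n % 4 = 1 then s (n / 4)
    else !s (n / 4)
  decreasing_by
    all_goals exact Nat.div_lt_self (by omega) (by omega)

lemma s_eq (n : ℕ) : s n =
    if n % 4 = 0 then false
    else if n % 4 = 3 then true
    else if n % 4 = 1 then s (n / 4)
    else !s (n / 4) := by
  rw [s]
  simp only [dite_eq_ite]

lemma svF (n : ℕ) (h : n % 4 = 0) : s n = false := by rw [s_eq, if_pos h]
lemma svT (n : ℕ) (h : n % 4 = 3) : s n = true := by
  rw [s_eq, if_neg (by omega), if_pos h]
lemma svS (n m : ℕ) (h : n = 4*m+1) : s n = s m := by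
  rw [s_eq, if_neg (by omega), if_neg (by omega), if_pos (by omega)]
  congr 1; omega
lemma svN (n m : ℕ) (h : n = 4*m+2) : s n = !s m := by
  rw [s_eq, if_neg (by omega), if_neg (by omega), if_neg (by omega)]
  congr 2; omega

lemma no111 (k : ℕ) : ¬ (s k = true ∧ s (k+1) = true ∧ s (k+2) = true) := by
  rintro ⟨h0, h1, h2⟩
  obtain ⟨m, r, hr, rfl⟩ : ∃ m r, r < 4 ∧ k = 4*m + r :=
    ⟨k/4, k%4, by omega, by omega⟩
  interval_cases r
  · rw [svF _ (by omega)] at h0; exact absurd h0 (by simp)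
  · rw [svS _ m (by omega)] at h0
    rw [svN _ m (by omega)] at h1
    rw [h0] at h1; exact absurd h1 (by simp)
  · rw [svF _ (by omega)] at h2; exact absurd h2 (by simp)
  · rw [svF _ (by omega)] at h1; exact absurd h1 (by simp)

lemma no000 (k : ℕ) : ¬ (s k = false ∧ s (k+1) = false ∧ s (k+2) = false) := by
  rintro ⟨h0, h1, h2⟩
  obtain ⟨m, r, hr, rfl⟩ : ∃ m r, r < 4 ∧ k = 4*m + r :=
    ⟨k/4, k%4, by omega, by omega⟩
  interval_cases r
  · rw [svS _ m (by omega)] at h1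
    rw [svN _ m (by omega)] at h2
    rw [h1] at h2; exact absurd h2 (by simp)
  · rw [svT _ (by omega)] at h2; exact absurd h2 (by simp)
  · rw [svT _ (by omega)] at h1; exact absurd h1 (by simp)
  · rw [svT _ (by omega)] at h0; exact absurd h0 (by simp)

/-- no period-Λ square in `s` when `3 ∣ Λ` -/
theorem thmS : ∀ Λ, 0 < Λ → 3 ∣ Λ → ∀ a, ¬ (∀ j, j < Λ → s (a+j) = s (a+j+Λ)) := by
  intro Λ
  induction Λ using Nat.strong_induction_on with
  | _ Λ IH =>
  intro hpos hdvd a hP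
  obtain ⟨m, r, hr, ha⟩ : ∃ m r, r < 4 ∧ a = 4*m + r :=
    ⟨a/4, a%4, by omega, by omega⟩
  rcases (by omega : Λ % 4 = 0 ∨ Λ % 4 = 1 ∨ Λ % 4 = 2 ∨ Λ % 4 = 3) with h4 | h4 | h4 | h4
  · -- Λ ≡ 0 mod 4 : desubstitute
    set q0 := (a+2)/4 with hq0
    have hq0b : a ≤ 4*q0 + 1 ∧ 4*q0 + 1 ≤ a + 3 := by omega
    set Λ' := Λ / 4 with hΛ'
    have hP' : ∀ j', j' < Λ' → s (q0+j') = s (q0+j'+Λ') := by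
      intro j' hj'
      have h := hP (4*(q0+j')+1 - a) (by omega)
      rw [show a + (4*(q0+j')+1 - a) = 4*(q0+j')+1 by omega] at h
      rw [svS _ (q0+j') rfl] at h
      rw [svS (4*(q0+j')+1+Λ) (q0+j'+Λ') (by omega)] at h
      exact h
    exact IH Λ' (by omega) (by omega) (by omega) q0 hP'
  · -- Λ ≡ 1 mod 4
    have h := hP (4*(a/4)+3 - a) (by omega)
    rw [show a + (4*(a/4)+3 - a) = 4*(a/4)+3 by omega] at h
    rw [svT _ (by omega), svF _ (by omega)] at h
    exact absurd h (by simp)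
  · -- Λ ≡ 2 mod 4, so Λ = 6 or Λ ≥ 18
    by_cases h6 : Λ = 6
    · subst h6
      interval_cases r
      · -- a = 4m
        have h0 := hP 0 (by omega); have h1 := hP 1 (by omega); have h3 := hP 3 (by omega)
        rw [ha] at h0 h1 h3
        rw [show 4*m+0 = 4*m by ring, svF _ (by omega),
            svN (4*m+0+6) (m+1) (by omega)] at h0
        rw [svS (4*m+1) m (by omega), svT (4*m+1+6) (by omega)] at h1
        rw [svT (4*m+3) (by omega), svS (4*m+3+6) (m+2) (by omega)] at h3
        exact no111 m ⟨h1, by simpa using h0.symm, h3.symm⟩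
      · -- a = 4m+1
        have h0 := hP 0 (by omega); have h2 := hP 2 (by omega); have h4' := hP 4 (by omega)
        rw [ha] at h0 h2 h4'
        rw [show 4*m+1+0 = 4*m+1 by ring, svS (4*m+1) m (by omega), svT (4*m+1+6) (by omega)] at h0
        rw [svT (4*m+1+2) (by omega), svS (4*m+1+2+6) (m+2) (by omega)] at h2
        rw [svS (4*m+1+4) (m+1) (by omega), svT (4*m+1+4+6) (by omega)] at h4'
        exact no111 m ⟨h0, h4', h2.symm⟩
      · -- a = 4m+2
        have h0 := hP 0 (by omega); have h1 := hP 1 (by omega); have h3 := hP 3 (by omega)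
        rw [ha] at h0 h1 h3
        rw [show 4*m+2+0 = 4*m+2 by ring, svN (4*m+2) m (by omega), svF (4*m+2+6) (by omega)] at h0
        rw [svT (4*m+2+1) (by omega), svS (4*m+2+1+6) (m+2) (by omega)] at h1
        rw [svS (4*m+2+3) (m+1) (by omega), svT (4*m+2+3+6) (by omega)] at h3
        exact no111 m ⟨by simpa using h0, h3, h1.symm⟩
      · -- a = 4m+3
        have h0 := hP 0 (by omega); have h2 := hP 2 (by omega); have h4' := hP 4 (by omega)
        rw [ha] at h0 h2 h4'
        rw [show 4*m+3+0 = 4*m+3 by ring, svT (4*m+3) (by omega), svS (4*m+3+6) (m+2) (by omega)] at h0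
        rw [svS (4*m+3+2) (m+1) (by omega), svT (4*m+3+2+6) (by omega)] at h2
        rw [svT (4*m+3+4) (by omega), svS (4*m+3+4+6) (m+3) (by omega)] at h4'
        exact no111 (m+1) ⟨h2, h0.symm, by simpa using h4'.symm⟩
    · -- Λ ≥ 18
      have hΛ18 : 18 ≤ Λ := by omega
      set q0 := (a+2)/4 with hq0
      have hq0b : a ≤ 4*q0 + 1 ∧ 4*q0 + 1 ≤ a + 3 := by omega
      have key : ∀ t, t < 3 → s (q0 + t) = true := by
        intro t ht
        have h := hP (4*(q0+t)+1 - a) (by omega)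
        rw [show a + (4*(q0+t)+1 - a) = 4*(q0+t)+1 by omega] at h
        rw [svS _ (q0+t) rfl, svT (4*(q0+t)+1+Λ) (by omega)] at h
        exact h
      exact no111 q0 ⟨key 0 (by omega), by simpa using key 1 (by omega), by simpa using key 2 (by omega)⟩
  · -- Λ ≡ 3 mod 4
    by_cases hsp : r = 1 ∧ Λ = 3
    · obtain ⟨hr1, hΛ3⟩ := hsp
      subst hΛ3; subst ha; subst hr1
      have h0 := hP 0 (by omega); have h1 := hP 1 (by omega); have h2 := hP 2 (by omega)
      rw [show 4*m+1+0 = 4*m+1 by ring, svS (4*m+1) m (by omega), svF (4*m+1+3) (by omega)] at h0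
      rw [svN (4*m+1+1) m (by omega), svS (4*m+1+1+3) (m+1) (by omega)] at h1
      rw [svT (4*m+1+2) (by omega), svN (4*m+1+2+3) (m+1) (by omega)] at h2
      rw [h0] at h1
      rw [← h1] at h2
      exact absurd h2 (by simp)
    · have hsp' : r ≠ 1 ∨ Λ ≠ 3 := by tauto
      have hlt : 4*((a+3)/4) - a < Λ := by omega
      have h := hP (4*((a+3)/4) - a) hlt
      rw [show a + (4*((a+3)/4) - a) = 4*((a+3)/4) by omega] at h
      rw [svF _ (by omega), svT _ (by omega)] at h
      exact absurd h (by simp)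

/-- prefix sums of `s` -/
def C : ℕ → ℕ
  | 0 => 0
  | n+1 => C n + (s n).toNat

/-- the infinite ternary word -/
def w (n : ℕ) : Fin 3 := ⟨C n % 3, Nat.mod_lt _ (by norm_num)⟩

lemma Csucc (n : ℕ) : C (n+1) = C n + (s n).toNat := rfl

lemma Cstep4 (k : ℕ) : C (4*k+4) = C (4*k) + 2 := by
  have e : C (4*k+4) = C (4*k) + (s (4*k)).toNat + (s (4*k+1)).toNat
      + (s (4*k+2)).toNat + (s (4*k+3)).toNat := by
    rw [show 4*k+4 = (4*k+3)+1 by ring, Csucc, show 4*k+3 = (4*k+2)+1 by ring, Csucc,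
        show 4*k+2 = (4*k+1)+1 by ring, Csucc, show 4*k+1 = (4*k)+1 by ring, Csucc]
    try ring
  rw [svF (4*k) (by omega), svS (4*k+1) k rfl, svN (4*k+2) k rfl, svT (4*k+3) (by omega)] at e
  cases h : s k <;> rw [h] at e <;>
    simp only [Bool.not_true, Bool.not_false, Bool.toNat_false, Bool.toNat_true] at e <;> omega

lemma Cblock (q : ℕ) : ∀ n, C (4*q + 4*n) = C (4*q) + 2*n := by
  intro n
  induction n with
  | zero => simp
  | succ n ih =>
    have h : 4*q + 4*(n+1) = 4*(q+n) + 4 := by ring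
    rw [h, Cstep4, show 4*(q+n) = 4*q+4*n by ring, ih]
    ring

/-- main combinatorial theorem: `w` has no factor `ZZ` with `|Z| ≥ 2` -/
theorem noSquare : ∀ L i, 2 ≤ L → ¬ (∀ j, j < L → w (i+j) = w (i+L+j)) := by
  intro L i hL hW
  have hC : ∀ j, j < L → C (i+j) % 3 = C (i+j+L) % 3 := by
    intro j hj
    have h := congrArg Fin.val (hW j hj)
    simpa [w, show i+L+j = i+j+L by ring] using h
  have hs : ∀ j, j + 1 < L → s (i+j) = s (i+j+L) := by
    intro j hj
    have h1 := hC j (by omega)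
    have h2 := hC (j+1) (by omega)
    rw [show i+(j+1) = (i+j)+1 by ring, Csucc] at h2
    rw [show (i+j)+1+L = (i+j+L)+1 by ring, Csucc] at h2
    cases hb1 : s (i+j) <;> cases hb2 : s (i+j+L)
    · rfl
    · exfalso; rw [hb1, hb2] at h2; simp at h2; omega
    · exfalso; rw [hb1, hb2] at h2; simp at h2; omega
    · rfl
  have hsum0 : C i % 3 = C (i+L) % 3 := by
    have h := hC 0 (by omega)
    simpa using h
  obtain ⟨m, r, hr, hi⟩ : ∃ m r, r < 4 ∧ i = 4*m + r :=
    ⟨i/4, i%4, by omega, by omega⟩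
  rcases (by omega : L % 4 = 0 ∨ L % 4 = 1 ∨ L % 4 = 2 ∨ L % 4 = 3) with h4 | h4 | h4 | h4
  · -- L ≡ 0 mod 4
    set q := (i+3)/4 with hq
    have hqb : i ≤ 4*q ∧ 4*q ≤ i + 3 := by omega
    have walk : ∀ d, d ≤ 4*q - i → C (i+d) % 3 = C (i+d+L) % 3 := by
      intro d
      induction d with
      | zero => intro _; simpa using hsum0
      | succ d ih =>
        intro hd
        have h1 := ih (by omega)
        have h2 := hs d (by omega)
        rw [show i+(d+1) = (i+d)+1 by ring, Csucc]
        rw [show (i+d)+1+L = (i+d+L)+1 by ring, Csucc]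
        rw [h2]
        omega
    have hA : C (4*q) % 3 = C (4*q + L) % 3 := by
      have h := walk (4*q - i) (le_refl _)
      rw [show i + (4*q - i) = 4*q by omega] at h
      exact h
    have hB : C (4*q + L) = C (4*q) + 2*(L/4) := by
      have h := Cblock q (L/4)
      rw [show 4*(L/4) = L by omega] at h
      exact h
    have hdvd3 : 3 ∣ L/4 := by omega
    have hL4 : 0 < L/4 := by omega
    by_cases hi2 : i % 4 = 2
    · have hP' : ∀ j', j' < L/4 → s (i/4 + j') = s (i/4 + j' + L/4) := by
        intro j' hj'
        have h := hs (4*j') (by omega)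
        rw [show i + 4*j' = 4*(i/4 + j') + 2 by omega] at h
        rw [svN _ (i/4 + j') rfl] at h
        rw [show 4*(i/4+j')+2+L = 4*(i/4+j'+L/4)+2 by omega] at h
        rw [svN (4*(i/4+j'+L/4)+2) (i/4 + j' + L/4) rfl] at h
        simpa using h
      exact thmS (L/4) hL4 hdvd3 (i/4) hP'
    · set q1 := (i+2)/4 with hq1
      have hq1b : i ≤ 4*q1 + 1 ∧ 4*q1 + 1 ≤ i + 2 := by omega
      have hP' : ∀ j', j' < L/4 → s (q1 + j') = s (q1 + j' + L/4) := by
        intro j' hj'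
        have h := hs (4*(q1+j')+1 - i) (by omega)
        rw [show i + (4*(q1+j')+1 - i) = 4*(q1+j') + 1 by omega] at h
        rw [svS _ (q1 + j') rfl] at h
        rw [show 4*(q1+j')+1+L = 4*(q1+j'+L/4)+1 by omega] at h
        rw [svS (4*(q1+j'+L/4)+1) (q1 + j' + L/4) rfl] at h
        exact h
      exact thmS (L/4) hL4 hdvd3 q1 hP'
  · -- L ≡ 1 mod 4 (so L ≥ 5)
    have h := hs (4*(i/4)+3 - i) (by omega)
    rw [show i + (4*(i/4)+3 - i) = 4*(i/4)+3 by omega] at h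
    rw [svT _ (by omega), svF _ (by omega)] at h
    exact absurd h (by simp)
  · -- L ≡ 2 mod 4
    by_cases h2' : L = 2
    · subst h2'
      have h0 := hs 0 (by omega)
      have e : C (i+2) = C i + (s i).toNat + (s (i+1)).toNat := by
        rw [show i+2 = (i+1)+1 by ring, Csucc, Csucc]; try ring
      rw [show i+0 = i by ring, show i+0+2 = i+2 by ring] at h0
      have hb0 : s i = false ∧ s (i+1) = false := by
        cases hb0 : s i <;> cases hb1 : s (i+1) <;> rw [hb0, hb1] at e <;>
          simp only [Bool.not_true, Bool.not_false, Bool.toNat_false, Bool.toNat_true] at e <;> simp <;> omega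
      exact no000 i ⟨hb0.1, hb0.2, by rw [← h0, hb0.1]⟩
    · by_cases h6' : L = 6
      · subst h6'
        interval_cases r
        · have h0 := hs 0 (by omega); have h1 := hs 1 (by omega); have h3 := hs 3 (by omega)
          rw [show i+0 = i by ring, show i+0+6 = i+6 by ring] at h0
          rw [svF i (by omega), svN (i+6) (m+1) (by omega)] at h0
          rw [svS (i+1) m (by omega), svT (i+1+6) (by omega)] at h1
          rw [svT (i+3) (by omega), svS (i+3+6) (m+2) (by omega)] at h3
          exact no111 m ⟨h1, by simpa using h0.symm, h3.symm⟩
        · have h0 := hs 0 (by omega); have h2 := hs 2 (by omega); have h4' := hs 4 (by omega)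
          rw [show i+0 = i by ring, show i+0+6 = i+6 by ring] at h0
          rw [svS i m (by omega), svT (i+6) (by omega)] at h0
          rw [svT (i+2) (by omega), svS (i+2+6) (m+2) (by omega)] at h2
          rw [svS (i+4) (m+1) (by omega), svT (i+4+6) (by omega)] at h4'
          exact no111 m ⟨h0, h4', h2.symm⟩
        · have h0 := hs 0 (by omega); have h1 := hs 1 (by omega); have h3 := hs 3 (by omega)
          rw [show i+0 = i by ring, show i+0+6 = i+6 by ring] at h0
          rw [svN i m (by omega), svF (i+6) (by omega)] at h0
          rw [svT (i+1) (by omega), svS (i+1+6) (m+2) (by omega)] at h1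
          rw [svS (i+3) (m+1) (by omega), svT (i+3+6) (by omega)] at h3
          exact no111 m ⟨by simpa using h0, h3, h1.symm⟩
        · have h0 := hs 0 (by omega); have h2 := hs 2 (by omega); have h4' := hs 4 (by omega)
          rw [show i+0 = i by ring, show i+0+6 = i+6 by ring] at h0
          rw [svT i (by omega), svS (i+6) (m+2) (by omega)] at h0
          rw [svS (i+2) (m+1) (by omega), svT (i+2+6) (by omega)] at h2
          rw [svT (i+4) (by omega), svS (i+4+6) (m+3) (by omega)] at h4'
          exact no111 (m+1) ⟨h2, h0.symm, h4'.symm⟩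
      · by_cases h10' : L = 10
        · subst h10'
          interval_cases r
          · have h0 := hs 0 (by omega); have h1 := hs 1 (by omega); have h5 := hs 5 (by omega)
            rw [show i+0 = i by ring, show i+0+10 = i+10 by ring] at h0
            rw [svF i (by omega), svN (i+10) (m+2) (by omega)] at h0
            rw [svS (i+1) m (by omega), svT (i+1+10) (by omega)] at h1
            rw [svS (i+5) (m+1) (by omega), svT (i+5+10) (by omega)] at h5
            exact no111 m ⟨h1, h5, by simpa using h0.symm⟩
          · have h0 := hs 0 (by omega); have h4' := hs 4 (by omega); have h8 := hs 8 (by omega)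
            rw [show i+0 = i by ring, show i+0+10 = i+10 by ring] at h0
            rw [svS i m (by omega), svT (i+10) (by omega)] at h0
            rw [svS (i+4) (m+1) (by omega), svT (i+4+10) (by omega)] at h4'
            rw [svS (i+8) (m+2) (by omega), svT (i+8+10) (by omega)] at h8
            exact no111 m ⟨h0, h4', h8⟩
          · have h2 := hs 2 (by omega); have h3 := hs 3 (by omega); have h7 := hs 7 (by omega)
            rw [svF (i+2) (by omega), svN (i+2+10) (m+3) (by omega)] at h2
            rw [svS (i+3) (m+1) (by omega), svT (i+3+10) (by omega)] at h3
            rw [svS (i+7) (m+2) (by omega), svT (i+7+10) (by omega)] at h7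
            exact no111 (m+1) ⟨h3, h7, by simpa using h2.symm⟩
          · have h0 := hs 0 (by omega); have h2 := hs 2 (by omega); have h6 := hs 6 (by omega)
            rw [show i+0 = i by ring, show i+0+10 = i+10 by ring] at h0
            rw [svT i (by omega), svS (i+10) (m+3) (by omega)] at h0
            rw [svS (i+2) (m+1) (by omega), svT (i+2+10) (by omega)] at h2
            rw [svS (i+6) (m+2) (by omega), svT (i+6+10) (by omega)] at h6
            exact no111 (m+1) ⟨h2, h6, h0.symm⟩
        · -- L ≥ 14
          have hL14 : 14 ≤ L := by omega
          set q1 := (i+2)/4 with hq1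
          have hq1b : i ≤ 4*q1 + 1 ∧ 4*q1 + 1 ≤ i + 3 := by omega
          have key : ∀ t, t < 3 → s (q1 + t) = true := by
            intro t ht
            have h := hs (4*(q1+t)+1 - i) (by omega)
            rw [show i + (4*(q1+t)+1 - i) = 4*(q1+t)+1 by omega] at h
            rw [svS _ (q1+t) rfl, svT (4*(q1+t)+1+L) (by omega)] at h
            exact h
          exact no111 q1 ⟨key 0 (by omega), by simpa using key 1 (by omega),
            by simpa using key 2 (by omega)⟩
  · -- L ≡ 3 mod 4
    by_cases h3 : L = 3
    · subst h3
      have e : C (i+3) = C i + (s i).toNat + (s (i+1)).toNat + (s (i+2)).toNat := by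
        rw [show i+3 = (i+2)+1 by ring, Csucc, show i+2 = (i+1)+1 by ring, Csucc, Csucc]
        try ring
      interval_cases r
      · rw [svF i (by omega), svS (i+1) m (by omega), svN (i+2) m (by omega)] at e
        cases h : s m <;> rw [h] at e <;> simp only [Bool.not_true, Bool.not_false, Bool.toNat_false, Bool.toNat_true] at e <;> omega
      · rw [svS i m (by omega), svN (i+1) m (by omega), svT (i+2) (by omega)] at e
        cases h : s m <;> rw [h] at e <;> simp only [Bool.not_true, Bool.not_false, Bool.toNat_false, Bool.toNat_true] at e <;> omega
      · rw [svN i m (by omega), svT (i+1) (by omega), svF (i+2) (by omega)] at e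
        cases h : s m <;> rw [h] at e <;> simp only [Bool.not_true, Bool.not_false, Bool.toNat_false, Bool.toNat_true] at e <;> omega
      · rw [svT i (by omega), svF (i+1) (by omega), svS (i+2) (m+1) (by omega)] at e
        cases h : s (m+1) <;> rw [h] at e <;> simp only [Bool.not_true, Bool.not_false, Bool.toNat_false, Bool.toNat_true] at e <;> omega
    · -- L ≥ 7
      have h := hs (4*((i+3)/4) - i) (by omega)
      rw [show i + (4*((i+3)/4) - i) = 4*((i+3)/4) by omega] at h
      rw [svF _ (by omega), svT _ (by omega)] at h
      exact absurd h (by simp)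

lemma wstep (n : ℕ) : w (n+1) = w n ∨ w (n+1) = w n + 1 := by
  cases h : s n
  · left
    apply Fin.ext
    show C (n+1) % 3 = C n % 3
    rw [Csucc, h]; rfl
  · right
    apply Fin.ext
    show C (n+1) % 3 = ((C n % 3) + (1 % 3)) % 3
    rw [Csucc, h]
    simp only [Bool.toNat_true]
    omega

lemma fin3_tri : ∀ b : Fin 3, b ≠ b + 1 + 1 := by decide
lemma fin3_ne1 : ∀ b : Fin 3, b ≠ b + 1 := by decide

lemma factor_spec {u : List (Fin 3)} {ww : ℕ → Fin 3} (h : IsFactor u ww) :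
    ∃ i, ∀ t (ht : t < u.length), u[t] = ww (i + t) := by
  obtain ⟨i, hu⟩ := h
  refine ⟨i, fun t ht => ?_⟩
  have e := List.getElem_of_eq hu ht
  simpa using e

/-- if `Z` occurs in `w` at `p1` and `Z` reversed occurs at `p2`, then `Z` is a
palindrome (in fact constant), because steps of `w` are `+0/+1 mod 3`. -/
lemma rev_eq (Z : List (Fin 3)) (p1 p2 : ℕ)
    (h1 : ∀ t (ht : t < Z.length), Z[t] = w (p1+t))
    (h2 : ∀ t (ht : t < Z.length), Z[t] = w (p2 + (Z.length - 1 - t))) :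
    Z.reverse = Z := by
  have hconst : ∀ t (ht : t + 1 < Z.length), Z[t]'(by omega) = Z[t+1]'ht := by
    intro t ht
    by_contra hne
    have e1 : Z[t+1]'ht = Z[t]'(by omega) ∨ Z[t+1]'ht = Z[t]'(by omega) + 1 := by
      have hw := wstep (p1 + t)
      rw [← h1 t (by omega), show p1+t+1 = p1+(t+1) by ring, ← h1 (t+1) ht] at hw
      exact hw
    have e1' : Z[t+1]'ht = Z[t]'(by omega) + 1 := by
      rcases e1 with h | h
      · exact absurd h.symm hne
      · exact h
    have e2 : Z[t]'(by omega) = Z[t+1]'ht ∨ Z[t]'(by omega) = Z[t+1]'ht + 1 := by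
      have hw := wstep (p2 + (Z.length - 1 - (t+1)))
      rw [show p2 + (Z.length - 1 - (t+1)) + 1 = p2 + (Z.length - 1 - t) by omega] at hw
      rw [← h2 t (by omega), ← h2 (t+1) ht] at hw
      exact hw
    rcases e2 with h | h
    · exact hne h
    · rw [e1'] at h
      exact fin3_tri _ h
  have hzero : ∀ t (ht : t < Z.length), Z[t] = Z[0]'(by omega) := by
    intro t
    induction t with
    | zero => intro _; rfl
    | succ t ih =>
      intro ht
      rw [← hconst t ht, ih (by omega)]
  apply List.ext_getElem (by simp)
  intro n hn1 hn2
  rw [List.getElem_reverse]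
  have ha := hzero (Z.length - 1 - n) (by simp at hn1; omega)
  have hb := hzero n (by simpa using hn2)
  rw [ha, hb]

/-- no factor `Z ++ Z` with `|Z| ≥ 2` -/
lemma no_list_square (Z : List (Fin 3)) (hZ : 2 ≤ Z.length) :
    ¬ IsFactor (Z ++ Z) w := by
  intro h
  obtain ⟨i, hi⟩ := factor_spec h
  apply noSquare Z.length i hZ
  intro j hj
  have e1 : (Z ++ Z)[j]'(by simp; omega) = w (i + j) := hi j (by simp; omega)
  have e2 : (Z ++ Z)[Z.length + j]'(by simp; omega) = w (i + (Z.length + j)) :=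
    hi (Z.length + j) (by simp; omega)
  rw [List.getElem_append_left hj] at e1
  rw [List.getElem_append_right (by omega : Z.length ≤ Z.length + j)] at e2
  simp only [Nat.add_sub_cancel_left] at e2
  rw [← e1, show i + Z.length + j = i + (Z.length + j) by ring]
  exact e2

theorem stmt10' :
    ∀ X Y : List (Fin 3), X ≠ [] → Y ≠ [] →
      ¬ IsFactor (X ++ Y ++ X ++ Y.reverse) w ∧
        ¬ IsFactor (X ++ Y ++ X.reverse ++ Y.reverse) w := by
  intro X Y hX hY
  have hXl : 1 ≤ X.length := List.length_pos_iff.mpr hX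
  have hYl : 1 ≤ Y.length := List.length_pos_iff.mpr hY
  constructor
  · intro hF
    obtain ⟨i, hi⟩ := factor_spec hF
    have hYocc : ∀ t (ht : t < Y.length), Y[t] = w (i + X.length + t) := by
      intro t ht
      have e := hi (X.length + t) (by simp only [List.length_append, List.length_reverse]; omega)
      rw [List.getElem_append_left (by simp only [List.length_append, List.length_reverse]; omega),
          List.getElem_append_left (by simp only [List.length_append, List.length_reverse]; omega),
          List.getElem_append_right (by omega : X.length ≤ X.length + t)] at e
      simp only [Nat.add_sub_cancel_left] at e
      rw [e, show i + (X.length + t) = i + X.length + t by ring]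
    have hYrev : ∀ t (ht : t < Y.length),
        Y[t] = w ((i + X.length + Y.length + X.length) + (Y.length - 1 - t)) := by
      intro t ht
      have e := hi ((X.length + Y.length + X.length) + (Y.length - 1 - t)) (by simp only [List.length_append, List.length_reverse]; omega)
      rw [List.getElem_append_right (by simp only [List.length_append, List.length_reverse]; omega :
            (X ++ Y ++ X).length ≤ (X.length + Y.length + X.length) + (Y.length - 1 - t))] at e
      have hix : (X.length + Y.length + X.length) + (Y.length - 1 - t) - (X ++ Y ++ X).length
          = Y.length - 1 - t := by simp only [List.length_append, List.length_reverse]; omega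
      simp only [hix] at e
      rw [List.getElem_reverse] at e
      simp only [show Y.length - 1 - (Y.length - 1 - t) = t from by omega] at e
      rw [e, show i + (X.length + Y.length + X.length + (Y.length - 1 - t))
          = i + X.length + Y.length + X.length + (Y.length - 1 - t) by ring]
    have hpal : Y.reverse = Y := rev_eq Y (i + X.length) (i + X.length + Y.length + X.length)
      hYocc hYrev
    rw [hpal] at hF
    refine no_list_square (X ++ Y) (by simp only [List.length_append, List.length_reverse]; omega) ?_
    rw [show (X ++ Y) ++ (X ++ Y) = X ++ Y ++ X ++ Y by simp]
    exact hF
  · intro hF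
    obtain ⟨i, hi⟩ := factor_spec hF
    have hXocc : ∀ t (ht : t < X.length), X[t] = w (i + t) := by
      intro t ht
      have e := hi t (by simp only [List.length_append, List.length_reverse]; omega)
      rw [List.getElem_append_left (by simp only [List.length_append, List.length_reverse]; omega),
          List.getElem_append_left (by simp only [List.length_append, List.length_reverse]; omega),
          List.getElem_append_left ht] at e
      exact e
    have hXrev : ∀ t (ht : t < X.length),
        X[t] = w ((i + X.length + Y.length) + (X.length - 1 - t)) := by
      intro t ht
      have e := hi ((X.length + Y.length) + (X.length - 1 - t)) (by simp only [List.length_append, List.length_reverse]; omega)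
      rw [List.getElem_append_left (by simp only [List.length_append, List.length_reverse]; omega :
            (X.length + Y.length) + (X.length - 1 - t) < (X ++ Y ++ X.reverse).length)] at e
      rw [List.getElem_append_right (by simp only [List.length_append, List.length_reverse]; omega :
            (X ++ Y).length ≤ (X.length + Y.length) + (X.length - 1 - t))] at e
      have hix : (X.length + Y.length) + (X.length - 1 - t) - (X ++ Y).length
          = X.length - 1 - t := by simp only [List.length_append, List.length_reverse]; omega
      simp only [hix] at e
      rw [List.getElem_reverse] at e
      simp only [show X.length - 1 - (X.length - 1 - t) = t from by omega] at e
      rw [e, show i + (X.length + Y.length + (X.length - 1 - t))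
          = i + X.length + Y.length + (X.length - 1 - t) by ring]
    have hXpal : X.reverse = X := rev_eq X i (i + X.length + Y.length) hXocc hXrev
    have hYocc : ∀ t (ht : t < Y.length), Y[t] = w (i + X.length + t) := by
      intro t ht
      have e := hi (X.length + t) (by simp only [List.length_append, List.length_reverse]; omega)
      rw [List.getElem_append_left (by simp only [List.length_append, List.length_reverse]; omega),
          List.getElem_append_left (by simp only [List.length_append, List.length_reverse]; omega),
          List.getElem_append_right (by omega : X.length ≤ X.length + t)] at e
      simp only [Nat.add_sub_cancel_left] at e
      rw [e, show i + (X.length + t) = i + X.length + t by ring]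
    have hYrev : ∀ t (ht : t < Y.length),
        Y[t] = w ((i + X.length + Y.length + X.length) + (Y.length - 1 - t)) := by
      intro t ht
      have e := hi ((X.length + Y.length + X.length) + (Y.length - 1 - t)) (by simp only [List.length_append, List.length_reverse]; omega)
      rw [List.getElem_append_right (by simp only [List.length_append, List.length_reverse]; omega :
            (X ++ Y ++ X.reverse).length ≤ (X.length + Y.length + X.length) + (Y.length - 1 - t))] at e
      have hix : (X.length + Y.length + X.length) + (Y.length - 1 - t) - (X ++ Y ++ X.reverse).length
          = Y.length - 1 - t := by simp only [List.length_append, List.length_reverse]; omega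
      simp only [hix] at e
      rw [List.getElem_reverse] at e
      simp only [show Y.length - 1 - (Y.length - 1 - t) = t from by omega] at e
      rw [e, show i + (X.length + Y.length + X.length + (Y.length - 1 - t))
          = i + X.length + Y.length + X.length + (Y.length - 1 - t) by ring]
    have hYpal : Y.reverse = Y := rev_eq Y (i + X.length) (i + X.length + Y.length + X.length)
      hYocc hYrev
    rw [hXpal, hYpal] at hF
    refine no_list_square (X ++ Y) (by simp only [List.length_append, List.length_reverse]; omega) ?_
    rw [show (X ++ Y) ++ (X ++ Y) = X ++ Y ++ X ++ Y by simp]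
    exact hF

/-- The patterns `x y x y^R` and `x y x^R y^R` are 3-avoidable: there is an
infinite ternary word with no factor `X Y X Y^R` nor `X Y X^R Y^R`, `X, Y` nonempty. -/
theorem stmt10 :
    ∃ w : ℕ → Fin 3, ∀ X Y : List (Fin 3), X ≠ [] → Y ≠ [] →
      ¬ IsFactor (X ++ Y ++ X ++ Y.reverse) w ∧
        ¬ IsFactor (X ++ Y ++ X.reverse ++ Y.reverse) w := by
  exact ⟨w, stmt10'⟩
end
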